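/- Let H be the connected graph on n vertices that is the union of a complete graph K_m (m < n) and star graphs centered at vertices of K_m, each star meeting K_m only in its center, distinct stars being otherwise vertex-disjoint, and the leaves of the stars being exactly the n − m vertices outside K_m. Then q(I_c(H)) = 1; that is, the ideal of vertex covers I_c(H) admits an ordering u_1,…,u_t of its minimal monomial generators with linear quotients in which, for every j with 2 ≤ j ≤ t, the colon ideal (u_1,…,u_{j−1}) : (u_j) is generated by exactly one variable. -/

import Mathlib

open MvPolynomial Finset

/-- A set of vertices is a vertex cover if it meets every edge. -/
def IsVertexCover {V : Type*} (G : SimpleGraph V) (C : Set V) : Prop :=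
  ∀ ⦃u v : V⦄, G.Adj u v → u ∈ C ∨ v ∈ C

/-- The ideal of vertex covers of a graph on `Fin n`. -/
noncomputable def coverIdeal (K : Type*) [Field K] {n : ℕ} (G : SimpleGraph (Fin n)) :
    Ideal (MvPolynomial (Fin n) K) :=
  Ideal.span { p | ∃ C : Finset (Fin n), IsVertexCover G ↑C ∧ p = ∏ i ∈ C, X i }

/-- The edge ideal of a graph on `Fin n`. -/
noncomputable def edgeIdeal (K : Type*) [Field K] {n : ℕ} (G : SimpleGraph (Fin n)) :
    Ideal (MvPolynomial (Fin n) K) :=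
  Ideal.span { p | ∃ u v : Fin n, G.Adj u v ∧ p = X u * X v }

/-- `p` is a minimal monomial generator of the monomial ideal `I`:
it is a monomial in `I` none of whose proper monomial divisors lies in `I`. -/
def IsMinimalMonomialGen {K : Type*} [Field K] {n : ℕ}
    (I : Ideal (MvPolynomial (Fin n) K)) (p : MvPolynomial (Fin n) K) : Prop :=
  ∃ a : Fin n →₀ ℕ, p = monomial a (1 : K) ∧ p ∈ I ∧
    ∀ b : Fin n →₀ ℕ, b ≤ a → b ≠ a → monomial b (1 : K) ∉ I

/-- The maximal graded ideal (X_1, …, X_n) of the polynomial ring. -/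
noncomputable def gradedMaxIdeal (K : Type*) [Field K] (n : ℕ) :
    Ideal (MvPolynomial (Fin n) K) :=
  Ideal.span (Set.range X)

/-- The set of lengths of regular sequences on `R/I` consisting of elements of the
maximal graded ideal; its greatest element is the depth of `R/I`. -/
def depthSet (K : Type*) [Field K] {n : ℕ} (I : Ideal (MvPolynomial (Fin n) K)) : Set ℕ :=
  {k | ∃ rs : List (MvPolynomial (Fin n) K), rs.length = k ∧
    (∀ r ∈ rs, r ∈ gradedMaxIdeal K n) ∧
    RingTheory.Sequence.IsRegular (MvPolynomial (Fin n) K ⧸ I) rs}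

/-- A minimal graded free resolution of `R/I`:
`⋯ → F₂ → F₁ → F₀ = R → R/I → 0`, where `F_{j+1}` is free of rank `rk j` with
generator degrees `dgr j`, the map `F₁ → R` is given by the row `g` (whose image is `I`),
and the map `F_{j+2} → F_{j+1}` is given by the matrix `M j`.  All matrix entries are
homogeneous of the appropriate degree and lie in the maximal graded ideal (minimality),
and the complex is exact at every `F_{j}`, `j ≥ 1`. -/
def IsMinimalGradedFreeResolution {K : Type*} [Field K] {n : ℕ}
    (I : Ideal (MvPolynomial (Fin n) K))
    (rk : ℕ → ℕ) (dgr : ∀ j : ℕ, Fin (rk j) → ℕ)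
    (g : Fin (rk 0) → MvPolynomial (Fin n) K)
    (M : ∀ j : ℕ, Matrix (Fin (rk j)) (Fin (rk (j + 1))) (MvPolynomial (Fin n) K)) : Prop :=
  Ideal.span (Set.range g) = I ∧
  (∀ i, (g i).IsHomogeneous (dgr 0 i)) ∧
  (∀ i, constantCoeff (g i) = 0) ∧
  (∀ (j : ℕ) (k : Fin (rk j)) (i : Fin (rk (j + 1))),
      (M j k i).IsHomogeneous (dgr (j + 1) i - dgr j k)) ∧
  (∀ (j : ℕ) (k : Fin (rk j)) (i : Fin (rk (j + 1))),
      dgr (j + 1) i ≤ dgr j k → M j k i = 0) ∧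
  LinearMap.ker (Fintype.linearCombination (MvPolynomial (Fin n) K) g)
    = LinearMap.range (M 0).mulVecLin ∧
  (∀ j : ℕ, LinearMap.ker (M j).mulVecLin = LinearMap.range (M (j + 1)).mulVecLin)

/-!
The minimal vertex covers of `H` are the sets `Cₐ = (A ∖ {a}) ∪ {leaves of a}` for `a ∈ A`,
together with `A` itself exactly when every vertex of `A` has a leaf; if some `a₀ ∈ A` has no
leaf then `C_{a₀} = A ∖ {a₀}`. List first `D = A`, respectively `D = A ∖ {a₀}`, and then the
remaining `Cₐ`. Each such `Cₐ` misses `a`, while `a` lies in `D` and in every `C_b` with `b ≠ a`,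
and `D ⊆ Cₐ ∪ {a}`; for squarefree monomials this makes the colon ideal of `x^{Cₐ}` by the
earlier generators equal to `(xₐ)`.
-/

section SquarefreeMonomial

variable {σ : Type*}

noncomputable def sqfreeExp (C : Finset σ) : σ →₀ ℕ :=
  ∑ i ∈ C, Finsupp.single i 1

theorem sqfreeExp_apply [DecidableEq σ] (C : Finset σ) (x : σ) :
    sqfreeExp C x = if x ∈ C then 1 else 0 := by
  simp [sqfreeExp, Finsupp.finsetSum_apply, Finsupp.single_apply]

theorem sqfreeExp_insert [DecidableEq σ] {C : Finset σ} {k : σ} (hk : k ∉ C) :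
    sqfreeExp (insert k C) = sqfreeExp C + Finsupp.single k 1 := by
  rw [sqfreeExp, Finset.sum_insert hk, add_comm, sqfreeExp]

theorem sqfreeExp_le_sqfreeExp_iff {C D : Finset σ} : sqfreeExp C ≤ sqfreeExp D ↔ C ⊆ D := by
  classical
  simp only [Finsupp.le_def, sqfreeExp_apply]
  refine ⟨fun h x hx => ?_, fun h x => ?_⟩
  · have hx' := h x
    rw [if_pos hx] at hx'
    split_ifs at hx' with hxD
    · exact hxD
    · omega
  · split_ifs with hxC hxD
    exacts [le_rfl, absurd (h hxC) hxD, Nat.zero_le _, le_rfl]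

theorem sqfreeExp_injective : Function.Injective (sqfreeExp : Finset σ → σ →₀ ℕ) :=
  fun _ _ h => (sqfreeExp_le_sqfreeExp_iff.1 h.le).antisymm (sqfreeExp_le_sqfreeExp_iff.1 h.ge)

theorem prod_X_eq_monomial_sqfreeExp {R : Type*} [CommSemiring R] (C : Finset σ) :
    (∏ i ∈ C, X i : MvPolynomial σ R) = monomial (sqfreeExp C) 1 :=
  (monomial_sum_one C _).symm

theorem colon_span_monomial_eq_span_X {R : Type*} [CommSemiring R] (s : Set (σ →₀ ℕ))
    (b : σ →₀ ℕ) (k : σ) (hs : ∀ a ∈ s, a k ≠ 0) (hb : b k = 0)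
    (hdvd : ∃ a ∈ s, a ≤ b + Finsupp.single k 1) :
    Submodule.colon (Ideal.span ((fun a => monomial a (1 : R)) '' s))
        (Ideal.span {monomial b (1 : R)}) = Ideal.span {X k} := by
  rw [← Set.image_singleton (f := X)]
  apply le_antisymm
  · intro r hr
    rw [Submodule.mem_colon_span_singleton, smul_eq_mul, mem_ideal_span_monomial_image] at hr
    refine mem_ideal_span_X_image.2 fun d hd => ⟨k, rfl, fun hdk => ?_⟩
    have hdb : d + b ∈ (r * monomial b 1).support := by
      rwa [mem_support_iff, coeff_mul_monomial, mul_one, ← mem_support_iff]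
    obtain ⟨a, ha, hle⟩ := hr (d + b) hdb
    have := hle k
    simp only [Finsupp.add_apply, hdk, hb, add_zero, nonpos_iff_eq_zero] at this
    exact hs a ha this
  · rw [Set.image_singleton, Ideal.span_le, Set.singleton_subset_iff, SetLike.mem_coe,
      Submodule.mem_colon_span_singleton, smul_eq_mul, X, monomial_mul, one_mul, add_comm]
    obtain ⟨a, ha, hle⟩ := hdvd
    exact Ideal.mem_of_dvd _ (monomial_dvd_monomial.2 ⟨Or.inr hle, one_dvd _⟩)
      (Ideal.subset_span ⟨a, ha, rfl⟩)

theorem colon_span_sqfree_Iio_eq_span_X {R : Type*} [CommSemiring R] [DecidableEq σ] {t : ℕ}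
    (g : Fin t → Finset σ) (j : Fin t) (k : σ) (hk : k ∉ g j) (hprev : ∀ i < j, k ∈ g i)
    (hswap : ∃ i < j, g i ⊆ insert k (g j)) :
    Submodule.colon
        (Ideal.span ((fun i => monomial (sqfreeExp (g i)) (1 : R)) '' Set.Iio j))
        (Ideal.span {monomial (sqfreeExp (g j)) (1 : R)}) = Ideal.span {X k} := by
  rw [← Set.image_image (fun a => monomial a (1 : R)) (fun i => sqfreeExp (g i))]
  apply colon_span_monomial_eq_span_X
  · rintro _ ⟨i, hi, rfl⟩
    simp [sqfreeExp_apply, hprev i hi]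
  · simp [sqfreeExp_apply, hk]
  · obtain ⟨i, hi, hsub⟩ := hswap
    exact ⟨_, ⟨i, hi, rfl⟩, sqfreeExp_insert hk ▸ sqfreeExp_le_sqfreeExp_iff.2 hsub⟩

end SquarefreeMonomial

section CoverIdeal

variable {K : Type*} [Field K] {n : ℕ} {H : SimpleGraph (Fin n)}

theorem monomial_mem_coverIdeal_iff (a : Fin n →₀ ℕ) :
    monomial a (1 : K) ∈ coverIdeal K H ↔
      ∃ C : Finset (Fin n), IsVertexCover H ↑C ∧ sqfreeExp C ≤ a := by
  classical
  have hgen : {p | ∃ C : Finset (Fin n), IsVertexCover H ↑C ∧ p = ∏ i ∈ C, X i} =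
      (fun e => monomial e (1 : K)) '' (sqfreeExp '' {C | IsVertexCover H ↑C}) := by
    ext p
    simp [prod_X_eq_monomial_sqfreeExp, eq_comm]
  rw [coverIdeal, hgen, mem_ideal_span_monomial_image, support_monomial, if_neg one_ne_zero]
  simp

theorem setOf_isMinimalMonomialGen_coverIdeal :
    {p | IsMinimalMonomialGen (coverIdeal K H) p} =
      (fun C => monomial (sqfreeExp C) (1 : K)) ''
        {C | Minimal (fun C : Finset (Fin n) => IsVertexCover H ↑C) C} := by
  ext p
  constructor
  · rintro ⟨a, rfl, hmem, hmin⟩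
    have hexact : ∀ C : Finset (Fin n), IsVertexCover H ↑C → sqfreeExp C ≤ a → sqfreeExp C = a :=
      fun C hC hle => by_contra fun hne =>
        hmin _ hle hne ((monomial_mem_coverIdeal_iff _).2 ⟨C, hC, le_rfl⟩)
    obtain ⟨C, hC, hle⟩ := (monomial_mem_coverIdeal_iff a).1 hmem
    refine ⟨C, ⟨hC, fun B hB hBC => ?_⟩, congrArg (monomial · 1) (hexact C hC hle)⟩
    have hBa := hexact B hB ((sqfreeExp_le_sqfreeExp_iff.2 hBC).trans hle)
    exact (sqfreeExp_injective (hBa.trans (hexact C hC hle).symm)).ge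
  · rintro ⟨C, hC, rfl⟩
    rw [Set.mem_ofPred_eq] at hC
    refine ⟨sqfreeExp C, rfl, (monomial_mem_coverIdeal_iff _).2 ⟨C, hC.prop, le_rfl⟩,
      fun b hb hne hmem => hne ?_⟩
    obtain ⟨B, hB, hBb⟩ := (monomial_mem_coverIdeal_iff b).1 hmem
    have hBC : B = C := hC.eq_of_le hB (sqfreeExp_le_sqfreeExp_iff.1 (hBb.trans hb))
    exact hb.antisymm (hBC ▸ hBb)

end CoverIdeal

theorem exists_enum_with_pivots {σ : Type*} [DecidableEq σ] (D : Finset σ) (E : σ → Finset σ)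
    (P : Finset σ) (hPD : P ⊆ D) (hmem : ∀ a ∈ P, ∀ b ∈ P, a ≠ b → a ∈ E b)
    (hnotMem : ∀ a ∈ P, a ∉ E a) (hsub : ∀ a ∈ P, D ⊆ insert a (E a)) :
    ∃ (t : ℕ) (g : Fin t → Finset σ), Function.Injective g ∧
      Set.range g = insert D (E '' P) ∧
      ∀ j : Fin t, 0 < (j : ℕ) →
        ∃ k, k ∉ g j ∧ (∀ i < j, k ∈ g i) ∧ ∃ i < j, g i ⊆ insert k (g j) := by
  set e : Fin P.card ≃ P := P.equivFin.symm
  have hE : ∀ i i', E (e i) = E (e i') → i = i' := fun i i' h => by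
    by_contra hne
    exact hnotMem _ (e i).2
      (h ▸ hmem _ (e i).2 _ (e i').2 fun h' => hne (e.injective (Subtype.ext h')))
  refine ⟨P.card + 1, Fin.cons D fun i => E (e i), ?_, ?_, ?_⟩
  · refine Fin.cons_injective_iff.2 ⟨?_, hE⟩
    rintro ⟨i, hi⟩
    exact hnotMem _ (e i).2 (by rw [show E (e i) = D from hi]; exact hPD (e i).2)
  · rw [Fin.range_cons]
    congr 1
    ext C
    simp [e.exists_congr_left, eq_comm]
  · intro j hj
    cases j using Fin.cases with
    | zero => exact absurd hj (lt_irrefl 0)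
    | succ i =>
      refine ⟨e i, by simpa using hnotMem _ (e i).2, fun i' hi' => ?_, 0, Fin.succ_pos i, ?_⟩
      · cases i' using Fin.cases with
        | zero => exact hPD (e i).2
        | succ i' =>
          simp only [Fin.cons_succ]
          exact hmem _ (e i).2 _ (e i').2 fun h =>
            (Fin.succ_lt_succ_iff.1 hi').ne (e.injective (Subtype.ext h)).symm
      · simpa using hsub _ (e i).2

section CliqueWithStars

variable {V : Type*} {H : SimpleGraph V} {A : Finset V} {f : V → V}

/-- `f v` is the center of the star with leaf `v ∉ A`. -/
def IsCliqueWithStars (H : SimpleGraph V) (A : Finset V) (f : V → V) : Prop :=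
  ∀ u v, H.Adj u v ↔ (u ∈ A ∧ v ∈ A ∧ u ≠ v) ∨ (u ∉ A ∧ v = f u) ∨ (v ∉ A ∧ u = f v)

theorem IsCliqueWithStars.isVertexCover_iff (hH : IsCliqueWithStars H A f) {C : Set V} :
    IsVertexCover H C ↔
      (∀ a ∈ A, ∀ b ∈ A, a ≠ b → a ∈ C ∨ b ∈ C) ∧ ∀ v, v ∉ A → v ∈ C ∨ f v ∈ C := by
  refine ⟨fun hC => ⟨fun a ha b hb hab => hC ((hH a b).2 (Or.inl ⟨ha, hb, hab⟩)),
    fun v hv => hC ((hH v (f v)).2 (Or.inr (Or.inl ⟨hv, rfl⟩)))⟩, ?_⟩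
  rintro ⟨hclique, hstar⟩ u v huv
  rcases (hH u v).1 huv with ⟨hu, hv, hne⟩ | ⟨hu, rfl⟩ | ⟨hv, rfl⟩
  exacts [hclique u hu v hv hne, hstar u hu, (hstar v hv).symm]

theorem isVertexCover_self (hf : ∀ v, v ∉ A → f v ∈ A) (hH : IsCliqueWithStars H A f) :
    IsVertexCover H ↑A :=
  hH.isVertexCover_iff.2 ⟨fun _ ha _ _ _ => Or.inl ha, fun v hv => Or.inr (hf v hv)⟩

theorem minimal_self (hf : ∀ v, v ∉ A → f v ∈ A) (hH : IsCliqueWithStars H A f)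
    (hleaf : ∀ a ∈ A, ∃ v, v ∉ A ∧ f v = a) :
    Minimal (fun C : Finset V => IsVertexCover H ↑C) A := by
  refine ⟨isVertexCover_self hf hH, fun B hB hBA a ha => ?_⟩
  obtain ⟨v, hv, rfl⟩ := hleaf a ha
  exact ((hH.isVertexCover_iff.1 hB).2 v hv).resolve_left fun hvB => hv (hBA hvB)

variable [Fintype V] [DecidableEq V]

def coverAvoiding (A : Finset V) (f : V → V) (a : V) : Finset V :=
  A.erase a ∪ univ.filter fun v => v ∉ A ∧ f v = a

theorem mem_coverAvoiding {a x : V} :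
    x ∈ coverAvoiding A f a ↔ (x ∈ A ∧ x ≠ a) ∨ (x ∉ A ∧ f x = a) := by
  simp only [coverAvoiding, mem_union, mem_erase, mem_filter, mem_univ, true_and]
  tauto

theorem notMem_coverAvoiding_self (hf : ∀ v, v ∉ A → f v ∈ A) (a : V) :
    a ∉ coverAvoiding A f a := by
  rw [mem_coverAvoiding]
  rintro (⟨_, hne⟩ | ⟨haA, hfa⟩)
  exacts [hne rfl, haA (hfa ▸ hf a haA)]

theorem subset_insert_coverAvoiding (a : V) : A ⊆ insert a (coverAvoiding A f a) := by
  intro x hx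
  rw [mem_insert, mem_coverAvoiding]
  by_cases hxa : x = a <;> simp [hxa, hx]

theorem coverAvoiding_eq_erase {a : V} (hleafless : ∀ v, v ∉ A → f v ≠ a) :
    coverAvoiding A f a = A.erase a := by
  ext x
  rw [mem_coverAvoiding, mem_erase]
  have := hleafless x
  tauto

theorem isVertexCover_coverAvoiding (hf : ∀ v, v ∉ A → f v ∈ A)
    (hH : IsCliqueWithStars H A f) (a : V) : IsVertexCover H ↑(coverAvoiding A f a) := by
  simp only [hH.isVertexCover_iff, mem_coe, mem_coverAvoiding]
  refine ⟨fun b hb c hc hbc => ?_, fun v hv => ?_⟩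
  · by_cases hba : b = a
    · exact Or.inr (Or.inl ⟨hc, hba ▸ hbc.symm⟩)
    · exact Or.inl (Or.inl ⟨hb, hba⟩)
  · by_cases hfv : f v = a
    · exact Or.inl (Or.inr ⟨hv, hfv⟩)
    · exact Or.inr (Or.inl ⟨hf v hv, hfv⟩)

theorem coverAvoiding_subset (hH : IsCliqueWithStars H A f) {C : Finset V}
    (hC : IsVertexCover H ↑C) {a : V} (ha : a ∈ A) (haC : a ∉ C) : coverAvoiding A f a ⊆ C := by
  rw [hH.isVertexCover_iff] at hC
  intro x hx
  rcases mem_coverAvoiding.1 hx with ⟨hxA, hxa⟩ | ⟨hxA, rfl⟩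
  · exact (hC.1 a ha x hxA (Ne.symm hxa)).resolve_left haC
  · exact (hC.2 x hxA).resolve_right haC

theorem minimal_coverAvoiding (hf : ∀ v, v ∉ A → f v ∈ A) (hH : IsCliqueWithStars H A f)
    {a : V} (ha : a ∈ A) :
    Minimal (fun C : Finset V => IsVertexCover H ↑C) (coverAvoiding A f a) :=
  ⟨isVertexCover_coverAvoiding hf hH a, fun _ hB hBC =>
    coverAvoiding_subset hH hB ha fun haB => notMem_coverAvoiding_self hf a (hBC haB)⟩

theorem eq_self_or_coverAvoiding_of_minimal (hf : ∀ v, v ∉ A → f v ∈ A)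
    (hH : IsCliqueWithStars H A f) {C : Finset V}
    (hC : Minimal (fun C : Finset V => IsVertexCover H ↑C) C) :
    C = A ∨ ∃ a ∈ A, C = coverAvoiding A f a := by
  by_cases hAC : A ⊆ C
  · exact Or.inl (hC.eq_of_le (isVertexCover_self hf hH) hAC).symm
  · obtain ⟨a, ha, haC⟩ := not_subset.1 hAC
    exact Or.inr ⟨a, ha, (hC.eq_of_le (isVertexCover_coverAvoiding hf hH a)
      (coverAvoiding_subset hH hC.prop ha haC)).symm⟩

theorem exists_setOf_minimal_isVertexCover_eq (hf : ∀ v, v ∉ A → f v ∈ A)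
    (hH : IsCliqueWithStars H A f) :
    ∃ D P : Finset V, P ⊆ D ∧ D ⊆ A ∧
      {C | Minimal (fun C : Finset V => IsVertexCover H ↑C) C} =
        insert D (coverAvoiding A f '' P) := by
  by_cases hleaf : ∀ a ∈ A, ∃ v, v ∉ A ∧ f v = a
  · refine ⟨A, A, subset_rfl, subset_rfl, Set.ext fun C => ⟨fun hC => ?_, ?_⟩⟩
    · rcases eq_self_or_coverAvoiding_of_minimal hf hH hC with rfl | ⟨a, ha, rfl⟩
      exacts [Set.mem_insert _ _, Set.mem_insert_of_mem _ ⟨a, ha, rfl⟩]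
    · rintro (rfl | ⟨a, ha, rfl⟩)
      exacts [minimal_self hf hH hleaf, minimal_coverAvoiding hf hH ha]
  · push Not at hleaf
    obtain ⟨a₀, ha₀, hleafless⟩ := hleaf
    have hD := coverAvoiding_eq_erase hleafless
    refine ⟨A.erase a₀, A.erase a₀, subset_rfl, erase_subset _ _,
      Set.ext fun C => ⟨fun hC => ?_, ?_⟩⟩
    · rcases eq_self_or_coverAvoiding_of_minimal hf hH hC with hCA | ⟨a, ha, rfl⟩
      · rw [hCA] at hC
        have hA := Minimal.eq_of_le (P := fun C : Finset V => IsVertexCover H ↑C) hC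
          (hD ▸ isVertexCover_coverAvoiding hf hH a₀) (erase_subset a₀ A)
        exact absurd (hA.symm ▸ ha₀) (notMem_erase a₀ A)
      · by_cases haa₀ : a = a₀
        · exact Or.inl (haa₀ ▸ hD)
        · exact Or.inr ⟨a, mem_erase.2 ⟨haa₀, ha⟩, rfl⟩
    · rintro (rfl | ⟨a, ha, rfl⟩)
      · exact hD ▸ minimal_coverAvoiding hf hH ha₀
      · exact minimal_coverAvoiding hf hH (mem_of_mem_erase ha)

end CliqueWithStars

theorem coverIdeal_q_eq_one_general
    (n : ℕ) (K : Type*) [Field K]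
    (A : Finset (Fin n))
    (f : Fin n → Fin n) (hf : ∀ v : Fin n, v ∉ A → f v ∈ A)
    (H : SimpleGraph (Fin n))
    (hH : ∀ u v : Fin n, H.Adj u v ↔
      (u ∈ A ∧ v ∈ A ∧ u ≠ v) ∨ (u ∉ A ∧ v = f u) ∨ (v ∉ A ∧ u = f v)) :
    ∃ (t : ℕ) (u : Fin t → MvPolynomial (Fin n) K),
      Function.Injective u ∧
      Set.range u = {p | IsMinimalMonomialGen (coverIdeal K H) p} ∧
      ∀ j : Fin t, 0 < (j : ℕ) →
        ∃ i : Fin n,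
          Submodule.colon (Ideal.span (u '' {i' : Fin t | (i' : ℕ) < (j : ℕ)}))
              (Ideal.span {u j})
            = Ideal.span {(X i : MvPolynomial (Fin n) K)} := by
  obtain ⟨D, P, hPD, hDA, hmin⟩ := exists_setOf_minimal_isVertexCover_eq hf hH
  obtain ⟨t, g, hg, hrange, hpivot⟩ := exists_enum_with_pivots D (coverAvoiding A f) P hPD
    (fun a ha b _ hab => mem_coverAvoiding.2 (Or.inl ⟨hDA (hPD ha), hab⟩))
    (fun a _ => notMem_coverAvoiding_self hf a)
    (fun a _ => hDA.trans (subset_insert_coverAvoiding a))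
  refine ⟨t, fun j => monomial (sqfreeExp (g j)) 1,
    (monomial_left_injective one_ne_zero).comp (sqfreeExp_injective.comp hg), ?_, fun j hj => ?_⟩
  · rw [setOf_isMinimalMonomialGen_coverIdeal, hmin, ← hrange, ← Set.range_comp]
    rfl
  · obtain ⟨k, hk, hprev, hswap⟩ := hpivot j hj
    exact ⟨k, colon_span_sqfree_Iio_eq_span_X g j k hk hprev hswap⟩

/-- For the graph `H` (complete graph on `A`, `|A| = m < n`, with stars centered at the
vertices of `A`, the leaves being exactly the vertices outside `A`), one has
`q(I_c(H)) = 1`: there is an ordering `u 0, …, u (t-1)` of the minimal monomial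
generators of `I_c(H)` with linear quotients in which every colon ideal
`(u 0, …, u (j-1)) : (u j)` (for `j ≥ 1`) is generated by exactly one variable. -/
theorem coverIdeal_q_eq_one
    (n m : ℕ) (hmn : m < n) (K : Type*) [Field K]
    (A : Finset (Fin n)) (hA : A.card = m)
    (f : Fin n → Fin n) (hf : ∀ v : Fin n, v ∉ A → f v ∈ A)
    (H : SimpleGraph (Fin n))
    (hH : ∀ u v : Fin n, H.Adj u v ↔
      (u ∈ A ∧ v ∈ A ∧ u ≠ v) ∨ (u ∉ A ∧ v = f u) ∨ (v ∉ A ∧ u = f v)) :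
    ∃ (t : ℕ) (u : Fin t → MvPolynomial (Fin n) K),
      Function.Injective u ∧
      Set.range u = {p | IsMinimalMonomialGen (coverIdeal K H) p} ∧
      ∀ j : Fin t, 0 < (j : ℕ) →
        ∃ i : Fin n,
          Submodule.colon (Ideal.span (u '' {i' : Fin t | (i' : ℕ) < (j : ℕ)}))
              (Ideal.span {u j})
            = Ideal.span {(X i : MvPolynomial (Fin n) K)} :=
  coverIdeal_q_eq_one_general n K A f hf H hH
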